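/- Let R be a commutative ring and I ⊆ R an ideal with I² = 0. Let (E^j)_{j∈ℤ} be a family of R-modules and d^j: E^j → E^{j+1} R-linear maps such that (d^{j+1} ∘ d^j)(E^j) ⊆ I·E^{j+2} for all j (so that d induces a square-zero differential on the quotient complex E^•/I·E^•). Then the following are equivalent: (i) there exist R-linear maps d'^j: E^j → E^{j+1} with d'^{j+1} ∘ d'^j = 0 and (d'^j − d^j)(E^j) ⊆ I·E^{j+1} for all j (i.e. the induced differential on E^•/I·E^• lifts to a genuine differential on E^•); (ii) there exist R-linear maps h^j: E^j → I·E^{j+1} with h^j(I·E^j) = 0 for all j, such that d^{j+1} ∘ d^j + d^{j+1} ∘ h^j + h^{j+1} ∘ d^j = 0 for all j (i.e. the obstruction d∘d is killed by a homotopy h). -/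
import Mathlib


/-!
STATEMENT 9: Let `R` be a commutative ring, `I ⊆ R` an ideal with `I² = 0`, and
`(E^j, d^j)` a family of `R`-modules with `R`-linear maps whose square lands in `I·E`.
Then the induced differential on `E/IE` lifts to a genuine square-zero differential on
`E` iff the obstruction `d∘d` is killed by a homotopy `h` with `h(E) ⊆ I·E`,
`h(I·E) = 0`.
-/

/-- If `I² = 0`, then `I` annihilates `I•⊤` in any module. -/
lemma aux_smul_zero {R : Type} [CommRing R] {I : Ideal R} (hI : I ^ 2 = ⊥)
    {M : Type} [AddCommGroup M] [Module R M] {i : R} (hi : i ∈ I)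
    {x : M} (hx : x ∈ I • (⊤ : Submodule R M)) : i • x = 0 := by
  refine Submodule.smul_induction_on hx ?_ ?_
  · intro j hj m _
    rw [smul_smul]
    have : i * j ∈ I ^ 2 := by
      rw [pow_two]; exact Ideal.mul_mem_mul hi hj
    rw [hI] at this
    rw [Submodule.mem_bot] at this
    rw [this, zero_smul]
  · intro a b ha hb
    rw [smul_add, ha, hb, add_zero]

/-- A linear map with image in `I•⊤` vanishes on `I•⊤` when `I² = 0`. -/
lemma aux_vanish {R : Type} [CommRing R] {I : Ideal R} (hI : I ^ 2 = ⊥)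
    {M N : Type} [AddCommGroup M] [Module R M] [AddCommGroup N] [Module R N]
    (f : M →ₗ[R] N) (hf : ∀ x, f x ∈ I • (⊤ : Submodule R N))
    {x : M} (hx : x ∈ I • (⊤ : Submodule R M)) : f x = 0 := by
  refine Submodule.smul_induction_on hx ?_ ?_
  · intro i hi m _
    rw [map_smul]
    exact aux_smul_zero hI hi (hf m)
  · intro a b ha hb
    rw [map_add, ha, hb, add_zero]

theorem statement9 (R : Type) [CommRing R] (I : Ideal R) (hI : I ^ 2 = ⊥)
    (E : ℤ → Type) [∀ j, AddCommGroup (E j)] [∀ j, Module R (E j)]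
    (d : ∀ j, E j →ₗ[R] E (j + 1))
    (hd : ∀ j (x : E j), d (j + 1) (d j x) ∈ I • (⊤ : Submodule R (E (j + 1 + 1)))) :
    (∃ d' : ∀ j, E j →ₗ[R] E (j + 1),
        (∀ j, (d' (j + 1)).comp (d' j) = 0) ∧
        ∀ j (x : E j), d' j x - d j x ∈ I • (⊤ : Submodule R (E (j + 1)))) ↔
      (∃ h : ∀ j, E j →ₗ[R] E (j + 1),
        (∀ j (x : E j), h j x ∈ I • (⊤ : Submodule R (E (j + 1)))) ∧
        (∀ j (x : E j), x ∈ I • (⊤ : Submodule R (E j)) → h j x = 0) ∧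
        ∀ j (x : E j),
          d (j + 1) (d j x) + d (j + 1) (h j x) + h (j + 1) (d j x) = 0) := by
  constructor
  · rintro ⟨d', hd'0, hd'd⟩
    refine ⟨fun j => d' j - d j, fun j x => hd'd j x, ?_, ?_⟩
    · intro j x hx
      exact aux_vanish hI _ (hd'd j) hx
    · intro j x
      have h0 : d' (j + 1) (d' j x) = 0 := by
        have := congrArg (fun f => f x) (hd'0 j)
        simpa using this
      have hvan : (d' (j+1) - d (j+1)) ((d' j - d j) x) = 0 :=
        aux_vanish hI _ (hd'd (j+1)) (hd'd j x)
      simp only [LinearMap.sub_apply, map_sub] at hvan ⊢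
      rw [h0] at hvan
      -- hvan : 0 - d (j+1) (d' j x) - (d' (j+1) (d j x) - d (j+1) (d j x)) = 0
      abel_nf
      abel_nf at hvan
      linear_combination (norm := abel) -hvan
  · rintro ⟨h, hmem, hvan, hsum⟩
    refine ⟨fun j => d j + h j, ?_, ?_⟩
    · intro j
      ext x
      simp only [LinearMap.comp_apply, LinearMap.add_apply, map_add, LinearMap.zero_apply]
      have hhh : h (j + 1) (h j x) = 0 := hvan (j+1) _ (hmem j x)
      have := hsum j x
      rw [hhh]
      linear_combination (norm := abel) this
    · intro j x
      simpa using hmem j x
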